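/- (Cut-elimination for GLS_seq.) Every second-level sequent Ψ ⇛ Φ provable in GLS_seq is provable in GLS_seq without using the cut rule. -/
import Mathlib


/-- Modal formulas: propositional variables, ⊥, →, □. -/
inductive Formula : Type
  | var : ℕ → Formula
  | bot : Formula
  | imp : Formula → Formula → Formula
  | box : Formula → Formula
deriving DecidableEq

/-- Levels of sequents in GLS_seq: first level (⇒) and second level (⇛). -/
inductive SeqLevel : Type
  | one
  | two
deriving DecidableEq

/-- The set of subformulas of a formula. -/
def Formula.subf : Formula → Finset Formula
  | .var p => {.var p}
  | .bot => {.bot}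
  | .imp φ ψ => insert (.imp φ ψ) (φ.subf ∪ ψ.subf)
  | .box φ => insert (.box φ) φ.subf

/-- SF(Ψ,Φ): all subformulas of formulas in Ψ ∪ Φ. -/
def SF (Ψ Φ : Finset Formula) : Finset Formula := (Ψ ∪ Φ).biUnion Formula.subf

def Formula.isBox : Formula → Bool
  | .box _ => true
  | _ => false

def Formula.unbox : Formula → Formula
  | .box φ => φ
  | φ => φ

/-- Θ_□ = {φ : □φ ∈ Θ}. -/
def boxInv (Θ : Finset Formula) : Finset Formula :=
  (Θ.filter fun ψ => ψ.isBox).image Formula.unbox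

/-- The sequent calculus GLS_seq, on sequents of two levels.  The Bool parameter
records whether the cut rule may be used: `GLSSeq true` is provability in GLS_seq,
`GLSSeq false` is cut-free provability.  The first-level fragment is exactly GL_seq. -/
inductive GLSSeq : Bool → SeqLevel → Finset Formula → Finset Formula → Prop
  | init (c lv φ) : GLSSeq c lv {φ} {φ}
  | initBot (c lv) : GLSSeq c lv {Formula.bot} ∅
  | cut {lv Γ Δ} (φ) : GLSSeq true lv Γ (insert φ Δ) → GLSSeq true lv (insert φ Γ) Δ →
      GLSSeq true lv Γ Δ
  | weak {c lv Γ Δ Γ' Δ'} : Γ ⊆ Γ' → Δ ⊆ Δ' → GLSSeq c lv Γ Δ → GLSSeq c lv Γ' Δ'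
  | impL {c lv Γ Δ φ ψ} : GLSSeq c lv Γ (insert φ Δ) → GLSSeq c lv (insert ψ Γ) Δ →
      GLSSeq c lv (insert (.imp φ ψ) Γ) Δ
  | impR {c lv Γ Δ φ ψ} : GLSSeq c lv (insert φ Γ) (insert ψ Δ) →
      GLSSeq c lv Γ (insert (.imp φ ψ) Δ)
  | boxGL {c Γ φ} : GLSSeq c .one (Γ ∪ Γ.image .box ∪ {.box φ}) {φ} →
      GLSSeq c .one (Γ.image .box) {.box φ}
  | boxL {c Γ Δ} (φ) : GLSSeq c .two (insert φ Γ) Δ → GLSSeq c .two (insert (.box φ) Γ) Δ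
  | lift {c Γ Δ} : GLSSeq c .one Γ Δ → GLSSeq c .two Γ Δ

/-- The sequent calculus GL_seq (on first-level sequents only). -/
inductive GLSeq : Bool → Finset Formula → Finset Formula → Prop
  | init (c φ) : GLSeq c {φ} {φ}
  | initBot (c) : GLSeq c {Formula.bot} ∅
  | cut {Γ Δ} (φ) : GLSeq true Γ (insert φ Δ) → GLSeq true (insert φ Γ) Δ → GLSeq true Γ Δ
  | weak {c Γ Δ Γ' Δ'} : Γ ⊆ Γ' → Δ ⊆ Δ' → GLSeq c Γ Δ → GLSeq c Γ' Δ'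
  | impL {c Γ Δ φ ψ} : GLSeq c Γ (insert φ Δ) → GLSeq c (insert ψ Γ) Δ →
      GLSeq c (insert (.imp φ ψ) Γ) Δ
  | impR {c Γ Δ φ ψ} : GLSeq c (insert φ Γ) (insert ψ Δ) → GLSeq c Γ (insert (.imp φ ψ) Δ)
  | boxGL {c Γ φ} : GLSeq c (Γ ∪ Γ.image .box ∪ {.box φ}) {φ} → GLSeq c (Γ.image .box) {.box φ}

/-- Proof trees of GLS_seq (cut included). -/
inductive GLSTree : SeqLevel → Finset Formula → Finset Formula → Type
  | init (lv φ) : GLSTree lv {φ} {φ}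
  | initBot (lv) : GLSTree lv {Formula.bot} ∅
  | cut {lv Γ Δ} (φ) : GLSTree lv Γ (insert φ Δ) → GLSTree lv (insert φ Γ) Δ → GLSTree lv Γ Δ
  | weak {lv Γ Δ} (Γ' Δ' : Finset Formula) : Γ ⊆ Γ' → Δ ⊆ Δ' → GLSTree lv Γ Δ → GLSTree lv Γ' Δ'
  | impL {lv Γ Δ} (φ ψ) : GLSTree lv Γ (insert φ Δ) → GLSTree lv (insert ψ Γ) Δ →
      GLSTree lv (insert (.imp φ ψ) Γ) Δ
  | impR {lv Γ Δ} (φ ψ) : GLSTree lv (insert φ Γ) (insert ψ Δ) → GLSTree lv Γ (insert (.imp φ ψ) Δ)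
  | boxGL (Γ φ) : GLSTree .one (Γ ∪ Γ.image .box ∪ {.box φ}) {φ} → GLSTree .one (Γ.image .box) {.box φ}
  | boxL {Γ Δ} (φ) : GLSTree .two (insert φ Γ) Δ → GLSTree .two (insert (.box φ) Γ) Δ
  | lift {Γ Δ} : GLSTree .one Γ Δ → GLSTree .two Γ Δ

/-- The set of principal formulas of all (□L) rules occurring in a proof tree. -/
def GLSTree.principals : ∀ {lv Γ Δ}, GLSTree lv Γ Δ → Finset Formula
  | _, _, _, .init _ _ => ∅
  | _, _, _, .initBot _ => ∅
  | _, _, _, .cut _ t₁ t₂ => t₁.principals ∪ t₂.principals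
  | _, _, _, .weak _ _ _ _ t => t.principals
  | _, _, _, .impL _ _ t₁ t₂ => t₁.principals ∪ t₂.principals
  | _, _, _, .impR _ _ t => t.principals
  | _, _, _, .boxGL _ _ t => t.principals
  | _, _, _, .boxL φ t => insert (Formula.box φ) t.principals
  | _, _, _, .lift t => t.principals

/-- A proof tree bundled with its level and conclusion. -/
abbrev PGLSTree : Type :=
  (lv : SeqLevel) × (Γ : Finset Formula) × (Δ : Finset Formula) × GLSTree lv Γ Δ

/-- The set of subproofs of a proof tree (including the tree itself). -/
def GLSTree.subproofs {lv Γ Δ} (t : GLSTree lv Γ Δ) : Set PGLSTree :=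
  insert ⟨lv, Γ, Δ, t⟩ <|
    match lv, Γ, Δ, t with
    | _, _, _, .init _ _ => ∅
    | _, _, _, .initBot _ => ∅
    | _, _, _, .cut _ t₁ t₂ => t₁.subproofs ∪ t₂.subproofs
    | _, _, _, .weak _ _ _ _ t₁ => t₁.subproofs
    | _, _, _, .impL _ _ t₁ t₂ => t₁.subproofs ∪ t₂.subproofs
    | _, _, _, .impR _ _ t₁ => t₁.subproofs
    | _, _, _, .boxGL _ _ t₁ => t₁.subproofs
    | _, _, _, .boxL _ t₁ => t₁.subproofs
    | _, _, _, .lift t₁ => t₁.subproofs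

/-- Kripke satisfaction over a frame `R` with atomic valuation `v`. -/
def KSat {W : Type} (R : W → W → Prop) (v : W → ℕ → Prop) : Formula → W → Prop
  | .var p, w => v w p
  | .bot, _ => False
  | .imp φ ψ, w => KSat R v φ w → KSat R v ψ w
  | .box φ, w => ∀ w', R w w' → KSat R v φ w'

/-- A GL-model: a nonempty, transitive, converse well-founded Kripke model. -/
structure GLModel where
  World : Type
  ne : Nonempty World
  R : World → World → Prop
  trans : Transitive R
  cwf : ∀ f : ℕ → World, ¬ ∀ i, R (f i) (f (i + 1))
  val : World → ℕ → Prop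

/-- Truth of a formula at a world of a GL-model. -/
def GLModel.sat (M : GLModel) (w : M.World) (φ : Formula) : Prop := KSat M.R M.val φ w

/-- Truth of a sequent Γ ▸ Δ at a world: some γ ∈ Γ is false or some δ ∈ Δ is true. -/
def GLModel.seqTrue (M : GLModel) (w : M.World) (Γ Δ : Finset Formula) : Prop :=
  (∃ γ ∈ Γ, ¬ M.sat w γ) ∨ (∃ δ ∈ Δ, M.sat w δ)

/-- w is Σ-reflexive: □α → α is true at w for every □α ∈ Σ. -/
def GLModel.reflexiveFor (M : GLModel) (w : M.World) (S : Finset Formula) : Prop :=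
  ∀ α : Formula, Formula.box α ∈ S → M.sat w ((Formula.box α).imp α)

/-- Saturation conditions (→L), (→R) for first-level sequents. -/
def Saturated1 (Γ Δ : Finset Formula) : Prop :=
  (∀ φ ψ : Formula, φ.imp ψ ∈ Γ → φ ∈ Δ ∨ ψ ∈ Γ) ∧
  (∀ φ ψ : Formula, φ.imp ψ ∈ Δ → φ ∈ Γ ∧ ψ ∈ Δ)

/-- Saturation for second-level sequents: additionally (□L). -/
def Saturated2 (Γ Δ : Finset Formula) : Prop :=
  Saturated1 Γ Δ ∧ ∀ φ : Formula, Formula.box φ ∈ Γ → φ ∈ Γ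

def Saturated : SeqLevel → Finset Formula → Finset Formula → Prop
  | .one => Saturated1
  | .two => Saturated2

/-- The Hilbert system GL. -/
inductive GLHilbert : Formula → Prop
  | ax1 (φ ψ : Formula) : GLHilbert (φ.imp (ψ.imp φ))
  | ax2 (φ ψ χ : Formula) :
      GLHilbert ((φ.imp (ψ.imp χ)).imp ((φ.imp ψ).imp (φ.imp χ)))
  | ax3 (φ : Formula) : GLHilbert (((φ.imp .bot).imp .bot).imp φ)
  | axK (φ ψ : Formula) :
      GLHilbert ((Formula.box (φ.imp ψ)).imp ((Formula.box φ).imp (Formula.box ψ)))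
  | axLob (φ : Formula) :
      GLHilbert ((Formula.box ((Formula.box φ).imp φ)).imp (Formula.box φ))
  | mp {φ ψ} : GLHilbert (φ.imp ψ) → GLHilbert φ → GLHilbert ψ
  | nec {φ} : GLHilbert φ → GLHilbert (Formula.box φ)

/-- The Hilbert system GLS: theorems of GL and all □α → α, closed under modus ponens. -/
inductive GLSHilbert : Formula → Prop
  | gl {φ} : GLHilbert φ → GLSHilbert φ
  | refl (α : Formula) : GLSHilbert ((Formula.box α).imp α)
  | mp {φ ψ} : GLSHilbert (φ.imp ψ) → GLSHilbert φ → GLSHilbert ψ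

/-- Conjunction (encoded with → and ⊥) of a list of formulas; empty conjunction is ⊤. -/
def Formula.conj : List Formula → Formula
  | [] => Formula.bot.imp Formula.bot
  | φ :: l => ((φ.imp ((Formula.conj l).imp .bot)).imp .bot)

/-- Membership predicate for the canonical model: saturated first-level sequents over S
that are not cut-free provable in GLS_seq. -/
def W0pred (S : Finset Formula) (s : Finset Formula × Finset Formula) : Prop :=
  Saturated1 s.1 s.2 ∧ ¬ GLSSeq false SeqLevel.one s.1 s.2 ∧ s.1 ∪ s.2 ⊆ S

/-- Worlds of the canonical model. -/
def W0 (S : Finset Formula) : Type := {s : Finset Formula × Finset Formula // W0pred S s}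

/-- Accessibility of the canonical model: (Γ⇒Δ) R₀ (Γ'⇒Δ') iff Γ_□ ⊊ Γ'_□ and Γ_□ ⊆ Γ'. -/
def R0 (S : Finset Formula) (s t : W0 S) : Prop :=
  boxInv s.1.1 ⊂ boxInv t.1.1 ∧ boxInv s.1.1 ⊆ t.1.1

/-- Valuation of the canonical model: p is true at (Γ⇒Δ) iff p ∈ Γ. -/
def V0 (S : Finset Formula) (s : W0 S) (p : ℕ) : Prop := Formula.var p ∈ s.1.1

/-- The extended set of worlds W = W₀ ∪ ℕ. -/
def Wext (S : Finset Formula) : Type := W0 S ⊕ ℕ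

/-- The extended accessibility relation, with distinguished world `wp` in W₀. -/
def Rext (S : Finset Formula) (wp : W0 S) : Wext S → Wext S → Prop
  | Sum.inl x, Sum.inl y => R0 S x y
  | Sum.inr _, Sum.inl y => y = wp ∨ R0 S wp y
  | Sum.inr n, Sum.inr m => m < n
  | Sum.inl _, Sum.inr _ => False

/-- The extended valuation: worlds in ℕ behave like the distinguished world `wp`. -/
def Vext (S : Finset Formula) (wp : W0 S) : Wext S → ℕ → Prop
  | Sum.inl x, p => V0 S x p
  | Sum.inr _, p => V0 S wp p
/-! ### Basic lemmas -/

lemma subf_self : ∀ φ : Formula, φ ∈ φ.subf := by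
  intro φ; cases φ <;> simp [Formula.subf]

lemma subf_trans : ∀ φ ψ : Formula, ψ ∈ φ.subf → ψ.subf ⊆ φ.subf := by
  intro φ
  induction φ with
  | var p => intro ψ h; simp [Formula.subf] at h; subst h; simp [Formula.subf]
  | bot => intro ψ h; simp [Formula.subf] at h; subst h; simp [Formula.subf]
  | imp φ₁ φ₂ ih1 ih2 =>
      intro ψ h
      simp only [Formula.subf, Finset.mem_insert, Finset.mem_union] at h
      rcases h with h | h | h
      · subst h; exact subset_refl _
      · exact (ih1 ψ h).trans (by intro x hx; simp only [Formula.subf, Finset.mem_insert, Finset.mem_union]; tauto)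
      · exact (ih2 ψ h).trans (by intro x hx; simp only [Formula.subf, Finset.mem_insert, Finset.mem_union]; tauto)
  | box φ₁ ih =>
      intro ψ h
      simp only [Formula.subf, Finset.mem_insert] at h
      rcases h with h | h
      · subst h; exact subset_refl _
      · exact (ih ψ h).trans (by intro x hx; simp only [Formula.subf, Finset.mem_insert]; tauto)

lemma SF_closed (Ψ Φ : Finset Formula) : ∀ φ ∈ SF Ψ Φ, φ.subf ⊆ SF Ψ Φ := by
  intro φ hφ
  simp only [SF, Finset.mem_biUnion] at hφ ⊢
  obtain ⟨χ, hχ, hφχ⟩ := hφ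
  intro x hx
  exact Finset.mem_biUnion.mpr ⟨χ, hχ, subf_trans _ _ hφχ hx⟩

lemma mem_SF_of_mem {Ψ Φ : Finset Formula} {φ : Formula} (h : φ ∈ Ψ ∪ Φ) : φ ∈ SF Ψ Φ :=
  Finset.mem_biUnion.mpr ⟨φ, h, subf_self φ⟩

lemma box_unbox_of_isBox {φ : Formula} (h : φ.isBox = true) : Formula.box φ.unbox = φ := by
  cases φ <;> simp_all [Formula.isBox, Formula.unbox]

lemma mem_boxInv {Θ : Finset Formula} {φ : Formula} : φ ∈ boxInv Θ ↔ Formula.box φ ∈ Θ := by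
  simp only [boxInv, Finset.mem_image, Finset.mem_filter]
  constructor
  · rintro ⟨ψ, ⟨hψ, hb⟩, rfl⟩
    rwa [box_unbox_of_isBox hb]
  · intro h
    exact ⟨Formula.box φ, ⟨h, rfl⟩, rfl⟩

lemma boxInv_image_box (Θ : Finset Formula) :
    (boxInv Θ).image Formula.box = Θ.filter fun ψ => ψ.isBox := by
  ext ψ
  simp only [Finset.mem_image, Finset.mem_filter]
  constructor
  · rintro ⟨φ, hφ, rfl⟩
    exact ⟨mem_boxInv.mp hφ, rfl⟩
  · rintro ⟨hψ, hb⟩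
    exact ⟨ψ.unbox, mem_boxInv.mpr (by rwa [box_unbox_of_isBox hb]), box_unbox_of_isBox hb⟩

lemma boxInv_card_le (Θ : Finset Formula) : (boxInv Θ).card ≤ Θ.card :=
  le_trans Finset.card_image_le (Finset.card_filter_le _ _)

lemma prove_mem {c : Bool} {lv : SeqLevel} {Γ Δ : Finset Formula} {φ : Formula}
    (h1 : φ ∈ Γ) (h2 : φ ∈ Δ) : GLSSeq c lv Γ Δ :=
  GLSSeq.weak (Finset.singleton_subset_iff.mpr h1) (Finset.singleton_subset_iff.mpr h2)
    (GLSSeq.init c lv φ)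

lemma prove_bot {c : Bool} {lv : SeqLevel} {Γ Δ : Finset Formula}
    (h1 : Formula.bot ∈ Γ) : GLSSeq c lv Γ Δ :=
  GLSSeq.weak (Finset.singleton_subset_iff.mpr h1) (Finset.empty_subset _)
    (GLSSeq.initBot c lv)
/-! ### Saturation -/

lemma saturate {S : Finset Formula} (hS : ∀ φ ∈ S, φ.subf ⊆ S) (lv : SeqLevel) :
    ∀ N Γ Δ, (S \ Γ).card + (S \ Δ).card = N → Γ ∪ Δ ⊆ S → ¬ GLSSeq false lv Γ Δ →
    ∃ Γ' Δ', Γ ⊆ Γ' ∧ Δ ⊆ Δ' ∧ Γ' ∪ Δ' ⊆ S ∧ Saturated lv Γ' Δ' ∧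
      ¬ GLSSeq false lv Γ' Δ' := by
  intro N
  induction N using Nat.strong_induction_on with
  | _ N IH =>
    intro Γ Δ hN hsub hnp
    have hΓS : Γ ⊆ S := (Finset.union_subset_iff.mp hsub).1
    have hΔS : Δ ⊆ S := (Finset.union_subset_iff.mp hsub).2
    by_cases h1 : ∀ φ ψ : Formula, φ.imp ψ ∈ Γ → φ ∈ Δ ∨ ψ ∈ Γ
    · by_cases h2 : ∀ φ ψ : Formula, φ.imp ψ ∈ Δ → φ ∈ Γ ∧ ψ ∈ Δ
      · by_cases h3 : lv = SeqLevel.two → ∀ φ : Formula, Formula.box φ ∈ Γ → φ ∈ Γ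
        · refine ⟨Γ, Δ, subset_refl _, subset_refl _, hsub, ?_, hnp⟩
          cases lv with
          | one => exact ⟨h1, h2⟩
          | two => exact ⟨⟨h1, h2⟩, h3 rfl⟩
        · -- box defect (lv = two)
          push_neg at h3
          obtain ⟨hlv, φ, hbΓ, hφΓ⟩ := h3
          subst hlv
          have hφS : φ ∈ S := hS _ (hΓS hbΓ) (by simp [Formula.subf, subf_self])
          have hnp' : ¬ GLSSeq false SeqLevel.two (insert φ Γ) Δ := by
            intro hp
            have := GLSSeq.boxL φ hp
            rw [Finset.insert_eq_self.mpr hbΓ] at this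
            exact hnp this
          have hmeas : (S \ insert φ Γ).card + (S \ Δ).card < N := by
            have h1' : (S \ insert φ Γ).card < (S \ Γ).card := by
              apply Finset.card_lt_card
              refine ⟨Finset.sdiff_subset_sdiff (subset_refl _) (Finset.subset_insert _ _), ?_⟩
              intro hc
              have : φ ∈ S \ insert φ Γ := hc (Finset.mem_sdiff.mpr ⟨hφS, hφΓ⟩)
              simp at this
            omega
          obtain ⟨Γ', Δ', hg, hd, h5, h6, h7⟩ :=
            IH _ hmeas (insert φ Γ) Δ rfl
              (by
                apply Finset.union_subset _ hΔS
                exact Finset.insert_subset hφS hΓS) hnp'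
          exact ⟨Γ', Δ', (Finset.subset_insert _ _).trans hg, hd, h5, h6, h7⟩
      · -- impR defect
        push_neg at h2
        obtain ⟨φ, ψ, himp, hnot⟩ := h2
        have hφS : φ ∈ S := hS _ (hΔS himp) (by simp [Formula.subf, subf_self])
        have hψS : ψ ∈ S := hS _ (hΔS himp)
          (by simp only [Formula.subf, Finset.mem_insert, Finset.mem_union]
              exact Or.inr (Or.inr (subf_self ψ)))
        have hnp' : ¬ GLSSeq false lv (insert φ Γ) (insert ψ Δ) := by
          intro hp
          have := GLSSeq.impR hp
          rw [Finset.insert_eq_self.mpr himp] at this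
          exact hnp this
        have hmeas : (S \ insert φ Γ).card + (S \ insert ψ Δ).card < N := by
          have hg1 : (S \ insert φ Γ).card ≤ (S \ Γ).card :=
            Finset.card_le_card (Finset.sdiff_subset_sdiff (subset_refl _) (Finset.subset_insert _ _))
          have hd1 : (S \ insert ψ Δ).card ≤ (S \ Δ).card :=
            Finset.card_le_card (Finset.sdiff_subset_sdiff (subset_refl _) (Finset.subset_insert _ _))
          rcases Classical.em (φ ∈ Γ) with hmem | hx
          case inl =>
            have hx : ψ ∉ Δ := hnot hmem
            have : (S \ insert ψ Δ).card < (S \ Δ).card := by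
              apply Finset.card_lt_card
              refine ⟨Finset.sdiff_subset_sdiff (subset_refl _) (Finset.subset_insert _ _), ?_⟩
              intro hc
              have : ψ ∈ S \ insert ψ Δ := hc (Finset.mem_sdiff.mpr ⟨hψS, hx⟩)
              simp at this
            omega
          case inr =>
            have : (S \ insert φ Γ).card < (S \ Γ).card := by
              apply Finset.card_lt_card
              refine ⟨Finset.sdiff_subset_sdiff (subset_refl _) (Finset.subset_insert _ _), ?_⟩
              intro hc
              have : φ ∈ S \ insert φ Γ := hc (Finset.mem_sdiff.mpr ⟨hφS, hx⟩)
              simp at this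
            omega
        obtain ⟨Γ', Δ', hg, hd, h5, h6, h7⟩ :=
          IH _ hmeas (insert φ Γ) (insert ψ Δ) rfl
            (Finset.union_subset (Finset.insert_subset hφS hΓS) (Finset.insert_subset hψS hΔS))
            hnp'
        exact ⟨Γ', Δ', (Finset.subset_insert _ _).trans hg,
          (Finset.subset_insert _ _).trans hd, h5, h6, h7⟩
    · -- impL defect
      push_neg at h1
      obtain ⟨φ, ψ, himp, hφΔ, hψΓ⟩ := h1
      have hφS : φ ∈ S := hS _ (hΓS himp) (by simp [Formula.subf, subf_self])
      have hψS : ψ ∈ S := hS _ (hΓS himp)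
        (by simp only [Formula.subf, Finset.mem_insert, Finset.mem_union]
            exact Or.inr (Or.inr (subf_self ψ)))
      have hcase : ¬ GLSSeq false lv Γ (insert φ Δ) ∨ ¬ GLSSeq false lv (insert ψ Γ) Δ := by
        by_contra hc
        push_neg at hc
        have := GLSSeq.impL hc.1 hc.2
        rw [Finset.insert_eq_self.mpr himp] at this
        exact hnp this
      rcases hcase with hnp' | hnp'
      · have hmeas : (S \ Γ).card + (S \ insert φ Δ).card < N := by
          have : (S \ insert φ Δ).card < (S \ Δ).card := by
            apply Finset.card_lt_card
            refine ⟨Finset.sdiff_subset_sdiff (subset_refl _) (Finset.subset_insert _ _), ?_⟩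
            intro hc
            have : φ ∈ S \ insert φ Δ := hc (Finset.mem_sdiff.mpr ⟨hφS, hφΔ⟩)
            simp at this
          omega
        obtain ⟨Γ', Δ', hg, hd, h5, h6, h7⟩ :=
          IH _ hmeas Γ (insert φ Δ) rfl
            (Finset.union_subset hΓS (Finset.insert_subset hφS hΔS)) hnp'
        exact ⟨Γ', Δ', hg, (Finset.subset_insert _ _).trans hd, h5, h6, h7⟩
      · have hmeas : (S \ insert ψ Γ).card + (S \ Δ).card < N := by
          have : (S \ insert ψ Γ).card < (S \ Γ).card := by
            apply Finset.card_lt_card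
            refine ⟨Finset.sdiff_subset_sdiff (subset_refl _) (Finset.subset_insert _ _), ?_⟩
            intro hc
            have : ψ ∈ S \ insert ψ Γ := hc (Finset.mem_sdiff.mpr ⟨hψS, hψΓ⟩)
            simp at this
          omega
        obtain ⟨Γ', Δ', hg, hd, h5, h6, h7⟩ :=
          IH _ hmeas (insert ψ Γ) Δ rfl
            (Finset.union_subset (Finset.insert_subset hψS hΓS) hΔS) hnp'
        exact ⟨Γ', Δ', (Finset.subset_insert _ _).trans hg, hd, h5, h6, h7⟩
/-! ### Soundness of the first level -/

lemma soundness_one : ∀ {c : Bool} {lv : SeqLevel} {Γ Δ : Finset Formula},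
    GLSSeq c lv Γ Δ → lv = SeqLevel.one →
    ∀ (M : GLModel) (w : M.World), M.seqTrue w Γ Δ := by
  intro c lv Γ Δ h
  induction h with
  | init c lv φ =>
      intro _ M w
      by_cases hs : M.sat w φ
      · exact Or.inr ⟨φ, Finset.mem_singleton_self φ, hs⟩
      · exact Or.inl ⟨φ, Finset.mem_singleton_self φ, hs⟩
  | initBot c lv =>
      intro _ M w
      exact Or.inl ⟨Formula.bot, Finset.mem_singleton_self _, fun hf => hf⟩
  | cut φ h1 h2 ih1 ih2 =>
      intro hlv M w
      rcases ih1 hlv M w with ⟨γ, hγ, hns⟩ | ⟨δ, hδ, hs⟩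
      · exact Or.inl ⟨γ, hγ, hns⟩
      · rcases Finset.mem_insert.mp hδ with rfl | hδ'
        · rcases ih2 hlv M w with ⟨γ, hγ, hns⟩ | ⟨δ', hδ', hs'⟩
          · rcases Finset.mem_insert.mp hγ with rfl | hγ'
            · exact absurd hs hns
            · exact Or.inl ⟨γ, hγ', hns⟩
          · exact Or.inr ⟨δ', hδ', hs'⟩
        · exact Or.inr ⟨δ, hδ', hs⟩
  | weak hΓ hΔ h ih =>
      intro hlv M w
      rcases ih hlv M w with ⟨γ, hγ, hns⟩ | ⟨δ, hδ, hs⟩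
      · exact Or.inl ⟨γ, hΓ hγ, hns⟩
      · exact Or.inr ⟨δ, hΔ hδ, hs⟩
  | @impL c lv Γ Δ φ ψ h1 h2 ih1 ih2 =>
      intro hlv M w
      by_cases hi : M.sat w (φ.imp ψ)
      · rcases ih1 hlv M w with ⟨γ, hγ, hns⟩ | ⟨δ, hδ, hs⟩
        · exact Or.inl ⟨γ, Finset.mem_insert_of_mem hγ, hns⟩
        · rcases Finset.mem_insert.mp hδ with rfl | hδ'
          · have hψ : M.sat w ψ := hi hs
            rcases ih2 hlv M w with ⟨γ, hγ, hns⟩ | ⟨δ', hδ', hs'⟩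
            · rcases Finset.mem_insert.mp hγ with rfl | hγ'
              · exact absurd hψ hns
              · exact Or.inl ⟨γ, Finset.mem_insert_of_mem hγ', hns⟩
            · exact Or.inr ⟨δ', hδ', hs'⟩
          · exact Or.inr ⟨δ, hδ', hs⟩
      · exact Or.inl ⟨φ.imp ψ, Finset.mem_insert_self _ _, hi⟩
  | @impR c lv Γ Δ φ ψ h ih =>
      intro hlv M w
      by_cases hφ : M.sat w φ
      · rcases ih hlv M w with ⟨γ, hγ, hns⟩ | ⟨δ, hδ, hs⟩
        · rcases Finset.mem_insert.mp hγ with rfl | hγ'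
          · exact absurd hφ hns
          · exact Or.inl ⟨γ, hγ', hns⟩
        · rcases Finset.mem_insert.mp hδ with heq | hδ'
          · exact Or.inr ⟨_, Finset.mem_insert_self _ _, fun _ => heq ▸ hs⟩
          · exact Or.inr ⟨δ, Finset.mem_insert_of_mem hδ', hs⟩
      · exact Or.inr ⟨φ.imp ψ, Finset.mem_insert_self _ _, fun hc => absurd hc hφ⟩
  | @boxGL c Γ φ h ih =>
      intro _ M w
      by_cases hb : M.sat w (Formula.box φ)
      · exact Or.inr ⟨Formula.box φ, Finset.mem_singleton_self _, hb⟩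
      by_cases hg : ∀ γ ∈ Γ.image Formula.box, M.sat w γ
      · exfalso
        classical
        -- all boxed hypotheses true at w, □φ false at w
        have hΓw : ∀ u, M.R w u → ∀ γ ∈ Γ, M.sat u γ := by
          intro u hwu γ hγ
          exact hg (Formula.box γ) (Finset.mem_image_of_mem _ hγ) u hwu
        have hΓbw : ∀ u, M.R w u → ∀ γ ∈ Γ, M.sat u (Formula.box γ) := by
          intro u hwu γ hγ u' huu'
          exact hg (Formula.box γ) (Finset.mem_image_of_mem _ hγ) u' (M.trans hwu huu')
        have step : ∀ u, (M.R w u ∧ ¬ M.sat u φ) → ∃ u', M.R u u' ∧ (M.R w u' ∧ ¬ M.sat u' φ) := by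
          rintro u ⟨hwu, hφu⟩
          rcases ih rfl M u with ⟨γ, hγ, hns⟩ | ⟨δ, hδ, hs⟩
          · rcases Finset.mem_union.mp hγ with hγ' | hγ'
            · rcases Finset.mem_union.mp hγ' with hγ'' | hγ''
              · exact absurd (hΓw u hwu γ hγ'') hns
              · obtain ⟨γ', hmem', heq'⟩ := Finset.mem_image.mp hγ''
                exact absurd (heq' ▸ hΓbw u hwu γ' hmem') hns
            · rw [Finset.mem_singleton] at hγ'
              subst hγ'
              -- ¬ M.sat u (□φ) : get a successor
              have : ¬ ∀ u', M.R u u' → M.sat u' φ := hns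
              push_neg at this
              obtain ⟨u', huu', hu'⟩ := this
              exact ⟨u', huu', M.trans hwu huu', hu'⟩
          · rw [Finset.mem_singleton] at hδ
            subst hδ
            exact absurd hs hφu
        have h0 : ∃ u, M.R w u ∧ ¬ M.sat u φ := by
          have : ¬ ∀ u', M.R w u' → M.sat u' φ := hb
          push_neg at this
          exact this
        choose g hg1 hg2 using step
        obtain ⟨u0, hu0⟩ := h0
        let f : ℕ → {u : M.World // M.R w u ∧ ¬ M.sat u φ} :=
          fun n => Nat.rec ⟨u0, hu0⟩ (fun _ p => ⟨g p.1 p.2, hg2 p.1 p.2⟩) n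
        exact M.cwf (fun n => (f n).1) (fun i => hg1 (f i).1 (f i).2)
      · push_neg at hg
        obtain ⟨γ, hγ, hns⟩ := hg
        exact Or.inl ⟨γ, hγ, hns⟩
  | boxL φ h ih =>
      intro hlv
      exact absurd hlv (by decide)
  | lift h ih =>
      intro hlv
      exact absurd hlv (by decide)
/-! ### Soundness of the second level, w.r.t. an abstract limit valuation -/

lemma soundness_two (T : Formula → Prop)
    (hbot : ¬ T Formula.bot)
    (himp : ∀ φ ψ : Formula, T (φ.imp ψ) ↔ (T φ → T ψ))
    (hrefl : ∀ φ : Formula, T (Formula.box φ) → T φ)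
    (hone : ∀ Γ Δ : Finset Formula, GLSSeq true SeqLevel.one Γ Δ →
      (∃ γ ∈ Γ, ¬ T γ) ∨ (∃ δ ∈ Δ, T δ)) :
    ∀ {c : Bool} {lv : SeqLevel} {Γ Δ : Finset Formula},
    GLSSeq c lv Γ Δ → c = true → lv = SeqLevel.two →
      (∃ γ ∈ Γ, ¬ T γ) ∨ (∃ δ ∈ Δ, T δ) := by
  intro c lv Γ Δ h
  induction h with
  | init c lv φ =>
      intro _ _
      by_cases hs : T φ
      · exact Or.inr ⟨φ, Finset.mem_singleton_self φ, hs⟩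
      · exact Or.inl ⟨φ, Finset.mem_singleton_self φ, hs⟩
  | initBot c lv =>
      intro _ _
      exact Or.inl ⟨Formula.bot, Finset.mem_singleton_self _, hbot⟩
  | cut φ h1 h2 ih1 ih2 =>
      intro hc hlv
      rcases ih1 hc hlv with ⟨γ, hγ, hns⟩ | ⟨δ, hδ, hs⟩
      · exact Or.inl ⟨γ, hγ, hns⟩
      · rcases Finset.mem_insert.mp hδ with heq | hδ'
        · rcases ih2 hc hlv with ⟨γ, hγ, hns⟩ | ⟨δ', hδ', hs'⟩
          · rcases Finset.mem_insert.mp hγ with heq' | hγ'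
            · exact absurd (heq ▸ hs : T φ) (heq' ▸ hns)
            · exact Or.inl ⟨γ, hγ', hns⟩
          · exact Or.inr ⟨δ', hδ', hs'⟩
        · exact Or.inr ⟨δ, hδ', hs⟩
  | weak hΓ hΔ h ih =>
      intro hc hlv
      rcases ih hc hlv with ⟨γ, hγ, hns⟩ | ⟨δ, hδ, hs⟩
      · exact Or.inl ⟨γ, hΓ hγ, hns⟩
      · exact Or.inr ⟨δ, hΔ hδ, hs⟩
  | @impL c lv Γ Δ φ ψ h1 h2 ih1 ih2 =>
      intro hc hlv
      by_cases hi : T (φ.imp ψ)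
      · rcases ih1 hc hlv with ⟨γ, hγ, hns⟩ | ⟨δ, hδ, hs⟩
        · exact Or.inl ⟨γ, Finset.mem_insert_of_mem hγ, hns⟩
        · rcases Finset.mem_insert.mp hδ with heq | hδ'
          · have hψ : T ψ := (himp φ ψ).mp hi (heq ▸ hs)
            rcases ih2 hc hlv with ⟨γ, hγ, hns⟩ | ⟨δ', hδ', hs'⟩
            · rcases Finset.mem_insert.mp hγ with heq' | hγ'
              · exact absurd hψ (heq' ▸ hns)
              · exact Or.inl ⟨γ, Finset.mem_insert_of_mem hγ', hns⟩
            · exact Or.inr ⟨δ', hδ', hs'⟩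
          · exact Or.inr ⟨δ, hδ', hs⟩
      · exact Or.inl ⟨φ.imp ψ, Finset.mem_insert_self _ _, hi⟩
  | @impR c lv Γ Δ φ ψ h ih =>
      intro hc hlv
      by_cases hφ : T φ
      · rcases ih hc hlv with ⟨γ, hγ, hns⟩ | ⟨δ, hδ, hs⟩
        · rcases Finset.mem_insert.mp hγ with heq | hγ'
          · exact absurd hφ (heq ▸ hns)
          · exact Or.inl ⟨γ, hγ', hns⟩
        · rcases Finset.mem_insert.mp hδ with heq | hδ'
          · exact Or.inr ⟨φ.imp ψ, Finset.mem_insert_self _ _, (himp φ ψ).mpr fun _ => heq ▸ hs⟩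
          · exact Or.inr ⟨δ, Finset.mem_insert_of_mem hδ', hs⟩
      · exact Or.inr ⟨φ.imp ψ, Finset.mem_insert_self _ _, (himp φ ψ).mpr fun hc' => absurd hc' hφ⟩
  | boxGL h ih =>
      intro _ hlv
      exact absurd hlv (by decide)
  | @boxL c Γ Δ φ h ih =>
      intro hc hlv
      by_cases hbφ : T (Formula.box φ)
      · have hφ : T φ := hrefl φ hbφ
        rcases ih hc hlv with ⟨γ, hγ, hns⟩ | ⟨δ, hδ, hs⟩
        · rcases Finset.mem_insert.mp hγ with heq | hγ'
          · exact absurd hφ (heq ▸ hns)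
          · exact Or.inl ⟨γ, Finset.mem_insert_of_mem hγ', hns⟩
        · exact Or.inr ⟨δ, hδ, hs⟩
      · exact Or.inl ⟨Formula.box φ, Finset.mem_insert_self _ _, hbφ⟩
  | @lift c Γ Δ h ih =>
      intro hc _
      subst hc
      exact hone Γ Δ h
/-! ### The extended canonical model is a GL-model -/

lemma r0_trans {S : Finset Formula} {s t u : W0 S} (h1 : R0 S s t) (h2 : R0 S t u) :
    R0 S s u :=
  ⟨h1.1.trans h2.1, h1.1.subset.trans h2.2⟩

lemma rext_trans (S : Finset Formula) (wp : W0 S) : Transitive (Rext S wp) := by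
  rintro (x | n) (y | m) (z | k) h1 h2
  · exact r0_trans h1 h2
  · exact h2.elim
  · exact h1.elim
  · exact h1.elim
  · rcases h1 with rfl | h1
    · exact Or.inr h2
    · exact Or.inr (r0_trans h1 h2)
  · exact h2.elim
  · rcases h2 with rfl | h2
    · exact Or.inl rfl
    · exact Or.inr h2
  · exact lt_trans h2 h1

/-- Rank function on the extended model, decreasing along `Rext`. -/
def wrank (S : Finset Formula) : Wext S → ℕ
  | Sum.inl x => S.card - (boxInv x.1.1).card
  | Sum.inr n => S.card + 1 + n

lemma wrank_lt {S : Finset Formula} {wp : W0 S} {a b : Wext S} (h : Rext S wp a b) :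
    wrank S b < wrank S a := by
  have hcard : ∀ x : W0 S, (boxInv x.1.1).card ≤ S.card := by
    intro x
    exact le_trans (boxInv_card_le _)
      (Finset.card_le_card ((Finset.union_subset_iff.mp x.2.2.2).1))
  rcases a with x | n <;> rcases b with y | m
  · have h1 : (boxInv x.1.1).card < (boxInv y.1.1).card := Finset.card_lt_card h.1
    have h2 := hcard y
    simp only [wrank]
    omega
  · exact h.elim
  · have := hcard y
    simp only [wrank]
    omega
  · have hmn : m < n := h
    simp only [wrank]
    omega
  
lemma rext_cwf (S : Finset Formula) (wp : W0 S) :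
    ∀ f : ℕ → Wext S, ¬ ∀ i, Rext S wp (f i) (f (i + 1)) := by
  intro f hf
  have hdesc : ∀ i, wrank S (f i) + i ≤ wrank S (f 0) := by
    intro i
    induction i with
    | zero => omega
    | succ n ihn =>
        have := wrank_lt (hf n)
        omega
  have := hdesc (wrank S (f 0) + 1)
  omega
/-! ### Truth lemmas for the canonical model -/

lemma truth_inl {S : Finset Formula} (hS : ∀ φ ∈ S, φ.subf ⊆ S) (wp : W0 S) :
    ∀ C : Formula, C ∈ S → ∀ x : W0 S,
      (C ∈ x.1.1 → KSat (Rext S wp) (Vext S wp) C (Sum.inl x)) ∧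
      (C ∈ x.1.2 → ¬ KSat (Rext S wp) (Vext S wp) C (Sum.inl x)) := by
  intro C
  induction C with
  | var p =>
      intro _ x
      constructor
      · intro h
        exact h
      · intro h hsat
        exact x.2.2.1 (prove_mem (hsat : Formula.var p ∈ x.1.1) h)
  | bot =>
      intro _ x
      exact ⟨fun h => (x.2.2.1 (prove_bot h)).elim, fun _ hf => hf⟩
  | imp φ ψ ihφ ihψ =>
      intro hC x
      have hφS : φ ∈ S := hS _ hC (by simp [Formula.subf, subf_self])
      have hψS : ψ ∈ S := hS _ hC
        (by simp only [Formula.subf, Finset.mem_insert, Finset.mem_union]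
            exact Or.inr (Or.inr (subf_self ψ)))
      constructor
      · intro h
        rcases x.2.1.1 φ ψ h with hφΔ | hψΓ
        · intro hs
          exact absurd hs ((ihφ hφS x).2 hφΔ)
        · intro _
          exact (ihψ hψS x).1 hψΓ
      · intro h hsat
        obtain ⟨hφΓ, hψΔ⟩ := x.2.1.2 φ ψ h
        exact (ihψ hψS x).2 hψΔ (hsat ((ihφ hφS x).1 hφΓ))
  | box φ ih =>
      intro hC x
      have hφS : φ ∈ S := hS _ hC (by simp [Formula.subf, subf_self])
      constructor
      · intro h w' hR
        rcases w' with y | n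
        · exact (ih hφS y).1 ((hR : R0 S x y).2 (mem_boxInv.mpr h))
        · exact hR.elim
      · intro h hsat
        -- build a successor world refuting φ
        set B := boxInv x.1.1 with hB
        have hBS : B ⊆ S := by
          intro ψ hψ
          have hbox : Formula.box ψ ∈ x.1.1 := mem_boxInv.mp hψ
          exact hS _ ((Finset.union_subset_iff.mp x.2.2.2).1 hbox)
            (by simp only [Formula.subf, Finset.mem_insert]
                exact Or.inr (subf_self ψ))
        have hsubS : (B ∪ B.image Formula.box ∪ {Formula.box φ}) ∪ {φ} ⊆ S := by
          apply Finset.union_subset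
          apply Finset.union_subset
          apply Finset.union_subset hBS
          · rw [hB, boxInv_image_box]
            exact (Finset.filter_subset _ _).trans (Finset.union_subset_iff.mp x.2.2.2).1
          · exact Finset.singleton_subset_iff.mpr
              ((Finset.union_subset_iff.mp x.2.2.2).2 h)
          · exact Finset.singleton_subset_iff.mpr hφS
        have hnp' : ¬ GLSSeq false SeqLevel.one (B ∪ B.image Formula.box ∪ {Formula.box φ}) {φ} := by
          intro hp
          have hgl := GLSSeq.boxGL hp
          apply x.2.2.1
          apply GLSSeq.weak _ (Finset.singleton_subset_iff.mpr h) hgl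
          rw [hB, boxInv_image_box]
          exact Finset.filter_subset _ _
        obtain ⟨Γ', Δ', hB1, hφ1, hS', hsat', hnp''⟩ :=
          saturate hS SeqLevel.one _ _ _ rfl hsubS hnp'
        have ypred : W0pred S (Γ', Δ') := ⟨hsat', hnp'', hS'⟩
        set y : W0 S := ⟨(Γ', Δ'), ypred⟩ with hy
        have hφΔ' : φ ∈ Δ' := hφ1 (Finset.mem_singleton_self φ)
        have hφnB : φ ∉ B := by
          intro hc
          exact hnp'' (prove_mem (hB1 (Finset.mem_union_left _ (Finset.mem_union_left _ hc))) hφΔ')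
        have hR : R0 S x y := by
          have hBsub : B ⊆ boxInv Γ' := by
            intro ψ hψ
            apply mem_boxInv.mpr
            exact hB1 (Finset.mem_union_left _
              (Finset.mem_union_right _ (Finset.mem_image_of_mem _ hψ)))
          constructor
          · refine ⟨hBsub, ?_⟩
            intro hc
            apply hφnB
            apply hc
            exact mem_boxInv.mpr (hB1 (Finset.mem_union_right _ (Finset.mem_singleton_self _)))
          · intro ψ hψ
            exact hB1 (Finset.mem_union_left _ (Finset.mem_union_left _ hψ))
        exact (ih hφS y).2 hφΔ' (hsat (Sum.inl y) hR)

lemma truth_inr {S : Finset Formula} (hS : ∀ φ ∈ S, φ.subf ⊆ S) (wp : W0 S)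
    (hsat2 : ∀ φ : Formula, Formula.box φ ∈ wp.1.1 → φ ∈ wp.1.1) :
    ∀ C : Formula, C ∈ S → ∀ n : ℕ,
      (C ∈ wp.1.1 → KSat (Rext S wp) (Vext S wp) C (Sum.inr n)) ∧
      (C ∈ wp.1.2 → ¬ KSat (Rext S wp) (Vext S wp) C (Sum.inr n)) := by
  intro C
  induction C with
  | var p =>
      intro _ n
      constructor
      · intro h
        exact h
      · intro h hsat
        exact wp.2.2.1 (prove_mem (hsat : Formula.var p ∈ wp.1.1) h)
  | bot =>
      intro _ n
      exact ⟨fun h => (wp.2.2.1 (prove_bot h)).elim, fun _ hf => hf⟩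
  | imp φ ψ ihφ ihψ =>
      intro hC n
      have hφS : φ ∈ S := hS _ hC (by simp [Formula.subf, subf_self])
      have hψS : ψ ∈ S := hS _ hC
        (by simp only [Formula.subf, Finset.mem_insert, Finset.mem_union]
            exact Or.inr (Or.inr (subf_self ψ)))
      constructor
      · intro h
        rcases wp.2.1.1 φ ψ h with hφΔ | hψΓ
        · intro hs
          exact absurd hs ((ihφ hφS n).2 hφΔ)
        · intro _
          exact (ihψ hψS n).1 hψΓ
      · intro h hsat
        obtain ⟨hφΓ, hψΔ⟩ := wp.2.1.2 φ ψ h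
        exact (ihψ hψS n).2 hψΔ (hsat ((ihφ hφS n).1 hφΓ))
  | box φ ih =>
      intro hC n
      have hφS : φ ∈ S := hS _ hC (by simp [Formula.subf, subf_self])
      constructor
      · intro h w' hR
        rcases w' with y | m
        · rcases (hR : y = wp ∨ R0 S wp y) with heq | hR'
          · rw [heq]
            exact (truth_inl hS wp φ hφS wp).1 (hsat2 φ h)
          · exact (truth_inl hS wp (Formula.box φ) hC wp).1 h (Sum.inl y) hR'
        · exact (ih hφS m).1 (hsat2 φ h)
      · intro h hsat
        apply (truth_inl hS wp (Formula.box φ) hC wp).2 h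
        intro w' hR'
        rcases w' with y | m
        · exact hsat (Sum.inl y) (Or.inr hR')
        · exact hR'.elim

/-! ### Stability of truth along the added chain -/

lemma stability (S : Finset Formula) (wp : W0 S) :
    ∀ C : Formula, ∃ N, (∀ n ≥ N, KSat (Rext S wp) (Vext S wp) C (Sum.inr n)) ∨
      (∀ n ≥ N, ¬ KSat (Rext S wp) (Vext S wp) C (Sum.inr n)) := by
  intro C
  induction C with
  | var p =>
      by_cases h : V0 S wp p
      · exact ⟨0, Or.inl fun n _ => h⟩
      · exact ⟨0, Or.inr fun n _ => h⟩
  | bot =>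
      exact ⟨0, Or.inr fun n _ hf => hf⟩
  | imp φ ψ ihφ ihψ =>
      obtain ⟨N1, h1⟩ := ihφ
      obtain ⟨N2, h2⟩ := ihψ
      rcases h1 with h1 | h1
      · rcases h2 with h2 | h2
        · exact ⟨max N1 N2, Or.inl fun n hn _ => h2 n (le_trans (le_max_right _ _) hn)⟩
        · refine ⟨max N1 N2, Or.inr fun n hn hs => ?_⟩
          exact h2 n (le_trans (le_max_right _ _) hn) (hs (h1 n (le_trans (le_max_left _ _) hn)))
      · exact ⟨N1, Or.inl fun n hn hc => absurd hc (h1 n hn)⟩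
  | box φ ih =>
      obtain ⟨N, hd⟩ := ih
      rcases hd with htrue | hfalse
      · by_cases hlow : (∀ m, m < N → KSat (Rext S wp) (Vext S wp) φ (Sum.inr m)) ∧
          ∀ y : W0 S, (y = wp ∨ R0 S wp y) → KSat (Rext S wp) (Vext S wp) φ (Sum.inl y)
        · refine ⟨0, Or.inl fun n _ => ?_⟩
          intro w' hR
          rcases w' with y | m
          · exact hlow.2 y hR
          · by_cases hm : m < N
            · exact hlow.1 m hm
            · exact htrue m (by omega)
        · rcases not_and_or.mp hlow with h1 | h2
          · push_neg at h1
            obtain ⟨m, hm, hns⟩ := h1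
            refine ⟨N, Or.inr fun n hn hs => ?_⟩
            exact hns (hs (Sum.inr m) (show m < n by omega))
          · push_neg at h2
            obtain ⟨y, hy, hns⟩ := h2
            refine ⟨0, Or.inr fun n _ hs => ?_⟩
            exact hns (hs (Sum.inl y) hy)
      · refine ⟨N + 1, Or.inr fun n hn hs => ?_⟩
        exact hfalse N (le_refl N) (hs (Sum.inr N) (show N < n by omega))
/-- Cut-elimination for GLS_seq: every provable second-level sequent is cut-free provable. -/
theorem gls_cut_elimination (Ψ Φ : Finset Formula) (h : GLSSeq true SeqLevel.two Ψ Φ) :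
    GLSSeq false SeqLevel.two Ψ Φ := by
  by_contra hn
  classical
  have hclosed : ∀ φ ∈ SF Ψ Φ, φ.subf ⊆ SF Ψ Φ := SF_closed Ψ Φ
  have hsub : Ψ ∪ Φ ⊆ SF Ψ Φ := fun φ hφ => mem_SF_of_mem hφ
  obtain ⟨Γp, Δp, hΨp, hΦp, hpS, hpsat, hpnp⟩ :=
    saturate hclosed SeqLevel.two _ Ψ Φ rfl hsub hn
  have hpsat2 : Saturated2 Γp Δp := hpsat
  have hpnp1 : ¬ GLSSeq false SeqLevel.one Γp Δp := fun hp => hpnp (GLSSeq.lift hp)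
  have wppred : W0pred (SF Ψ Φ) (Γp, Δp) := ⟨hpsat2.1, hpnp1, hpS⟩
  let wp : W0 (SF Ψ Φ) := ⟨(Γp, Δp), wppred⟩
  let M : GLModel :=
    { World := Wext (SF Ψ Φ)
      ne := ⟨Sum.inr 0⟩
      R := Rext (SF Ψ Φ) wp
      trans := rext_trans (SF Ψ Φ) wp
      cwf := rext_cwf (SF Ψ Φ) wp
      val := Vext (SF Ψ Φ) wp }
  let T : Formula → Prop :=
    fun C => ∃ N, ∀ n ≥ N, KSat (Rext (SF Ψ Φ) wp) (Vext (SF Ψ Φ) wp) C (Sum.inr n)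
  have hbot : ¬ T Formula.bot := by
    rintro ⟨N, hN⟩
    exact hN N (le_refl N)
  have himp : ∀ φ ψ : Formula, T (φ.imp ψ) ↔ (T φ → T ψ) := by
    intro φ ψ
    constructor
    · rintro ⟨N, hN⟩ ⟨N', hN'⟩
      exact ⟨max N N', fun n hn => hN n (le_trans (le_max_left _ _) hn)
        (hN' n (le_trans (le_max_right _ _) hn))⟩
    · intro hTT
      rcases stability (SF Ψ Φ) wp φ with ⟨N, hst | hst⟩
      · obtain ⟨N', hψ⟩ := hTT ⟨N, hst⟩
        exact ⟨N', fun n hn _ => hψ n hn⟩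
      · exact ⟨N, fun n hn hc => absurd hc (hst n hn)⟩
  have hrefl : ∀ φ : Formula, T (Formula.box φ) → T φ := by
    rintro φ ⟨N, hN⟩
    refine ⟨0, fun n _ => ?_⟩
    exact hN (max N (n + 1)) (le_max_left _ _) (Sum.inr n) (show n < max N (n + 1) by omega)
  have stabF : ∀ E : Finset Formula, ∃ N, ∀ C ∈ E,
      (∀ n ≥ N, KSat (Rext (SF Ψ Φ) wp) (Vext (SF Ψ Φ) wp) C (Sum.inr n)) ∨
      (∀ n ≥ N, ¬ KSat (Rext (SF Ψ Φ) wp) (Vext (SF Ψ Φ) wp) C (Sum.inr n)) := by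
    intro E
    induction E using Finset.induction_on with
    | empty => exact ⟨0, by simp⟩
    | @insert C E hCE ih =>
        obtain ⟨N, hN⟩ := ih
        obtain ⟨N', hd⟩ := stability (SF Ψ Φ) wp C
        refine ⟨max N' N, fun D hD => ?_⟩
        rcases Finset.mem_insert.mp hD with rfl | hD'
        · rcases hd with hd | hd
          · exact Or.inl fun n hn => hd n (le_trans (le_max_left _ _) hn)
          · exact Or.inr fun n hn => hd n (le_trans (le_max_left _ _) hn)
        · rcases hN D hD' with hh | hh
          · exact Or.inl fun n hn => hh n (le_trans (le_max_right _ _) hn)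
          · exact Or.inr fun n hn => hh n (le_trans (le_max_right _ _) hn)
  have hone : ∀ Γ Δ : Finset Formula, GLSSeq true SeqLevel.one Γ Δ →
      (∃ γ ∈ Γ, ¬ T γ) ∨ (∃ δ ∈ Δ, T δ) := by
    intro Γ Δ hp
    obtain ⟨N, hN⟩ := stabF (Γ ∪ Δ)
    have hval := soundness_one hp rfl M (Sum.inr N)
    rcases hval with ⟨γ, hγ, hns⟩ | ⟨δ, hδ, hs⟩
    · rcases hN γ (Finset.mem_union_left _ hγ) with hh | hh
      · exact absurd (hh N (le_refl N)) hns
      · refine Or.inl ⟨γ, hγ, ?_⟩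
        rintro ⟨N', hT'⟩
        exact hh (max N N') (le_max_left _ _) (hT' (max N N') (le_max_right _ _))
    · rcases hN δ (Finset.mem_union_right _ hδ) with hh | hh
      · exact Or.inr ⟨δ, hδ, ⟨N, hh⟩⟩
      · exact absurd hs (hh N (le_refl N))
  rcases soundness_two T hbot himp hrefl hone h rfl rfl with ⟨γ, hγ, hnT⟩ | ⟨δ, hδ, hTδ⟩
  · exact hnT ⟨0, fun n _ =>
      (truth_inr hclosed wp hpsat2.2 γ (hsub (Finset.mem_union_left _ hγ)) n).1 (hΨp hγ)⟩
  · obtain ⟨N, hTN⟩ := hTδ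
    exact (truth_inr hclosed wp hpsat2.2 δ (hsub (Finset.mem_union_right _ hδ)) N).2
      (hΦp hδ) (hTN N (le_refl N))
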